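/- arXiv:2210.01633 — 4 statements merged into one kernel-verified Lean document; each statement's English description precedes it below -/
import Mathlib

section
/- Let M ∈ ℝ^{n×n} be invertible and block diagonal with respect to partition p (M_{jj'} = 0 whenever p_j ≠ p_{j'}), and for each l ∈ [r] let c_l be a scalar and u^{p=l} the restriction of a vector u to part l. If each denominator 1 + c_l (u^{p=l})ᵀ M⁻¹ u^{p=l} is nonzero, then the rank-one updates c_l u^{p=l}(u^{p=l})ᵀ for all l can be applied to M⁻¹ simultaneously: (M + Σ_l c_l u^{p=l}(u^{p=l})ᵀ)⁻¹ = M⁻¹ − Σ_l (c_l/(1 + c_l (u^{p=l})ᵀ M⁻¹ u^{p=l})) M⁻¹u^{p=l}(u^{p=l})ᵀM⁻¹. -/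
open scoped Matrix

/-- `u^{p=l}`: the vector `u` with entries zeroed outside `{j : p j = l}`. -/
def restrictPart {n r : ℕ} (p : Fin n → Fin r) (u : Fin n → ℝ) (l : Fin r) : Fin n → ℝ :=
  fun j => if p j = l then u j else 0

open Matrix in
lemma srou_vmv_mul {n : ℕ} (a b : Fin n → ℝ) (N : Matrix (Fin n) (Fin n) ℝ) :
    vecMulVec a b * N = vecMulVec a (b ᵥ* N) := by
  ext i j
  simp [mul_apply, vecMulVec_apply, vecMul, dotProduct, Finset.mul_sum, mul_assoc]

open Matrix in
lemma srou_vmv_mul_vmv {n : ℕ} (a b c d : Fin n → ℝ) :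
    vecMulVec a b * vecMulVec c d = (b ⬝ᵥ c) • vecMulVec a d := by
  ext i j
  simp [mul_apply, vecMulVec_apply, dotProduct, Finset.sum_mul, Finset.mul_sum]
  ring_nf
  congr 1; ext k; ring

/-- Simultaneous Sherman–Morrison updates across the disjoint parts of a partition,
for a block-diagonal base matrix. -/
theorem simultaneous_rank_one_updates {n r : ℕ} (p : Fin n → Fin r)
    (M : Matrix (Fin n) (Fin n) ℝ) (hMdet : IsUnit M.det)
    (hM : ∀ j j' : Fin n, p j ≠ p j' → M j j' = 0)
    (c : Fin r → ℝ) (u : Fin n → ℝ)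
    (hd : ∀ l : Fin r,
      1 + c l * (restrictPart p u l ⬝ᵥ (M⁻¹ *ᵥ restrictPart p u l)) ≠ 0) :
    (M + ∑ l : Fin r,
        c l • Matrix.vecMulVec (restrictPart p u l) (restrictPart p u l))⁻¹ =
      M⁻¹ - ∑ l : Fin r,
        (c l / (1 + c l * (restrictPart p u l ⬝ᵥ (M⁻¹ *ᵥ restrictPart p u l)))) •
          (M⁻¹ * Matrix.vecMulVec (restrictPart p u l) (restrictPart p u l) * M⁻¹) := by
  classical
  haveI : Invertible M := M.invertibleOfIsUnitDet hMdet
  set w : Fin r → Fin n → ℝ := restrictPart p u with hw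
  set t : Fin r → ℝ := fun l => w l ⬝ᵥ (M⁻¹ *ᵥ w l) with ht
  set d : Fin r → ℝ := fun l => c l / (1 + c l * t l) with hdd
  have hMM : M * M⁻¹ = 1 := Matrix.mul_nonsing_inv M hMdet
  -- M⁻¹ is block diagonal
  have h1 : M.BlockTriangular p := fun i j h => hM i j h.ne'
  have h2 : M.BlockTriangular (OrderDual.toDual ∘ p) := fun i j h =>
    hM i j (OrderDual.toDual_lt_toDual.mp h).ne
  have hMi : ∀ j j' : Fin n, p j ≠ p j' → M⁻¹ j j' = 0 := by
    intro j j' hne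
    rcases hne.lt_or_gt with h | h
    · exact Matrix.blockTriangular_inv_of_blockTriangular h2
        (OrderDual.toDual_lt_toDual.mpr h)
    · exact Matrix.blockTriangular_inv_of_blockTriangular h1 h
  -- orthogonality of different parts through M⁻¹
  have orth : ∀ l m : Fin r, l ≠ m → (w l ᵥ* M⁻¹) ⬝ᵥ w m = 0 := by
    intro l m hlm
    simp only [dotProduct, Matrix.vecMul]
    apply Finset.sum_eq_zero
    intro j' _
    by_cases hj' : p j' = m
    · refine mul_eq_zero_of_left ?_ _
      apply Finset.sum_eq_zero
      intro j _
      by_cases hj : p j = l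
      · rw [hMi j j' (by rw [hj, hj']; exact hlm), mul_zero]
      · simp [hw, restrictPart, hj]
    · simp [hw, restrictPart, hj']
  have diag : ∀ l : Fin r, (w l ᵥ* M⁻¹) ⬝ᵥ w l = t l := by
    intro l
    rw [ht, ← Matrix.dotProduct_mulVec]
  apply Matrix.inv_eq_right_inv
  set V : Fin r → Matrix (Fin n) (Fin n) ℝ := fun l => Matrix.vecMulVec (w l) (w l) with hV
  have e2 : M * (∑ l : Fin r, d l • (M⁻¹ * V l * M⁻¹)) = ∑ l : Fin r, d l • (V l * M⁻¹) := by
    rw [Finset.mul_sum]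
    refine Finset.sum_congr rfl fun l _ => ?_
    rw [Matrix.mul_smul]
    congr 1
    rw [← Matrix.mul_assoc, ← Matrix.mul_assoc, hMM, Matrix.one_mul]
  have e3 : (∑ l : Fin r, c l • V l) * M⁻¹ = ∑ l : Fin r, c l • (V l * M⁻¹) := by
    rw [Finset.sum_mul]
    exact Finset.sum_congr rfl fun l _ => Matrix.smul_mul _ _ _
  have e4 : (∑ l : Fin r, c l • V l) * (∑ l : Fin r, d l • (M⁻¹ * V l * M⁻¹)) =
      ∑ l : Fin r, (c l * d l * t l) • (V l * M⁻¹) := by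
    rw [Finset.sum_mul]
    refine Finset.sum_congr rfl fun l _ => ?_
    rw [Finset.mul_sum]
    rw [Finset.sum_eq_single l]
    · rw [Matrix.smul_mul, Matrix.mul_smul, smul_smul]
      have : V l * (M⁻¹ * V l * M⁻¹) = t l • (V l * M⁻¹) := by
        rw [hV, ← Matrix.mul_assoc, ← Matrix.mul_assoc, srou_vmv_mul, srou_vmv_mul_vmv,
          diag l, Matrix.smul_mul, srou_vmv_mul]
      rw [this, smul_smul]
    · intro m _ hml
      have : V l * (M⁻¹ * V m * M⁻¹) = 0 := by
        rw [hV, ← Matrix.mul_assoc, ← Matrix.mul_assoc, srou_vmv_mul, srou_vmv_mul_vmv,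
          orth l m (Ne.symm hml)]
        simp
      rw [Matrix.smul_mul, Matrix.mul_smul, this]
      simp
    · intro h; exact absurd (Finset.mem_univ l) h
  have hsum : (∑ l : Fin r, d l • (V l * M⁻¹)) + ∑ l : Fin r, (c l * d l * t l) • (V l * M⁻¹)
      = ∑ l : Fin r, c l • (V l * M⁻¹) := by
    rw [← Finset.sum_add_distrib]
    refine Finset.sum_congr rfl fun l _ => ?_
    rw [← add_smul]
    congr 1
    have h : 1 + c l * t l ≠ 0 := hd l
    rw [hdd]
    field_simp
  rw [add_mul, mul_sub, mul_sub, hMM, e2, e3, e4, ← hsum]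
  abel
end

section
/- If M is invertible and block diagonal with respect to partition p, then det(M + Σ_{l=1}^r c_l u^{p=l}(u^{p=l})ᵀ) = det(M) · Π_{l=1}^r (1 + c_l (u^{p=l})ᵀ M⁻¹ u^{p=l}). -/
open scoped Matrix

theorem det_simultaneous_rank_one_updates {n r : ℕ} (p : Fin n → Fin r)
    (M : Matrix (Fin n) (Fin n) ℝ) (hMdet : IsUnit M.det)
    (hM : ∀ j j' : Fin n, p j ≠ p j' → M j j' = 0)
    (c : Fin r → ℝ) (u : Fin n → ℝ) :
    (M + ∑ l : Fin r,
        c l • Matrix.vecMulVec (restrictPart p u l) (restrictPart p u l)).det =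
      M.det * ∏ l : Fin r,
        (1 + c l * (restrictPart p u l ⬝ᵥ (M⁻¹ *ᵥ restrictPart p u l))) := by
  set v : Fin r → Fin n → ℝ := restrictPart p u with hv
  -- M⁻¹ is block diagonal
  have hMinv : ∀ j j' : Fin n, p j ≠ p j' → M⁻¹ j j' = 0 := by
    have hN : (Matrix.of fun j j' => if p j = p j' then M⁻¹ j j' else 0) * M = 1 := by
      have h1 : M⁻¹ * M = 1 := Matrix.nonsing_inv_mul M hMdet
      ext j j'
      by_cases h : p j = p j'
      · have : ((Matrix.of fun j j' => if p j = p j' then M⁻¹ j j' else 0) * M) j j'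
            = (M⁻¹ * M) j j' := by
          simp only [Matrix.mul_apply, Matrix.of_apply]
          refine Finset.sum_congr rfl fun k _ => ?_
          by_cases hk : p j = p k
          · rw [if_pos hk]
          · rw [if_neg hk, hM k j' (fun hh => hk (h ▸ hh.symm ▸ rfl)), mul_zero, mul_zero]
        rw [this, h1]
      · have hjj' : j ≠ j' := fun hh => h (hh ▸ rfl)
        simp only [Matrix.mul_apply, Matrix.of_apply, Matrix.one_apply_ne hjj']
        refine Finset.sum_eq_zero fun k _ => ?_
        by_cases hk : p j = p k
        · rw [hM k j' (fun hh => h (hk.trans hh)), mul_zero]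
        · rw [if_neg hk, zero_mul]
    intro j j' h
    have := Matrix.inv_eq_left_inv hN
    rw [this]
    simp [if_neg h]
  set w : Fin r → Fin n → ℝ := fun l => M⁻¹ *ᵥ v l with hw
  -- support of v and w
  have hvsupp : ∀ l j, p j ≠ l → v l j = 0 := by
    intro l j h; simp [hv, restrictPart, if_neg h]
  have hwsupp : ∀ l j, p j ≠ l → w l j = 0 := by
    intro l j h
    simp only [hw, Matrix.mulVec, dotProduct]
    refine Finset.sum_eq_zero fun k _ => ?_
    by_cases hk : p k = l
    · rw [hMinv j k (fun hh => h (hh.trans hk)), zero_mul]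
    · rw [hvsupp l k hk, mul_zero]
  have horth : ∀ l l', l ≠ l' → v l ⬝ᵥ w l' = 0 := by
    intro l l' h
    refine Finset.sum_eq_zero fun j _ => ?_
    by_cases hj : p j = l
    · rw [hwsupp l' j (fun hh => h (hj ▸ hh ▸ rfl)), mul_zero]
    · rw [hvsupp l j hj, zero_mul]
  set E : Fin r → Matrix (Fin n) (Fin n) ℝ :=
    fun l => c l • Matrix.vecMulVec (w l) (v l) with hE
  have hMv : ∀ l, M *ᵥ w l = v l := by
    intro l
    rw [hw]
    rw [Matrix.mulVec_mulVec, Matrix.mul_nonsing_inv M hMdet, Matrix.one_mulVec]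
  -- factorization
  have hfact : M + ∑ l : Fin r, c l • Matrix.vecMulVec (v l) (v l)
      = M * (1 + ∑ l : Fin r, E l) := by
    rw [Matrix.mul_add, Matrix.mul_one, Finset.mul_sum]
    congr 1
    refine Finset.sum_congr rfl fun l _ => ?_
    rw [hE, Matrix.mul_smul]
    congr 1
    ext i j
    simp only [Matrix.mul_apply, Matrix.vecMulVec_apply]
    have : ∑ k, M i k * (w l k * v l j) = (∑ k, M i k * w l k) * v l j := by
      rw [Finset.sum_mul]; exact Finset.sum_congr rfl fun k _ => by ring
    rw [this]
    have : (∑ k, M i k * w l k) = (M *ᵥ w l) i := rfl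
    rw [this, hMv l]
  -- rank one pieces annihilate each other
  have hEmul : ∀ l l', l ≠ l' → E l * E l' = 0 := by
    intro l l' h
    ext i j
    simp only [hE, Matrix.mul_apply, Matrix.smul_apply, Matrix.vecMulVec_apply,
      smul_eq_mul, Matrix.zero_apply]
    have : ∀ k, c l * (w l i * v l k) * (c l' * (w l' k * v l' j))
        = c l * c l' * (w l i * v l' j) * (v l k * w l' k) := by intro k; ring
    rw [Finset.sum_congr rfl fun k _ => this k, ← Finset.mul_sum]
    have : (∑ k, v l k * w l' k) = v l ⬝ᵥ w l' := rfl
    rw [this, horth l l' h, mul_zero]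
  -- det of each 1 + E l
  have hdetE : ∀ l, (1 + E l).det = 1 + c l * (v l ⬝ᵥ w l) := by
    intro l
    have h1 : E l = Matrix.vecMulVec (c l • w l) (v l) := by
      ext i j
      simp only [hE, Matrix.smul_apply, Matrix.vecMulVec_apply, Pi.smul_apply,
        smul_eq_mul]
      ring
    rw [h1, Matrix.vecMulVec_eq (Fin 1), Matrix.det_one_add_replicateCol_mul_replicateRow]
    rw [dotProduct_smul]
    simp [mul_comm]
  -- induction over finsets
  have key : ∀ s : Finset (Fin r), (1 + ∑ l ∈ s, E l).det
      = ∏ l ∈ s, (1 + c l * (v l ⬝ᵥ w l)) := by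
    intro s
    induction s using Finset.induction_on with
    | empty => simp
    | @insert a s ha ih =>
      have hsplit : (1 : Matrix (Fin n) (Fin n) ℝ) + ∑ l ∈ insert a s, E l
          = (1 + ∑ l ∈ s, E l) * (1 + E a) := by
        rw [Finset.sum_insert ha, Matrix.add_mul, Matrix.one_mul, Matrix.mul_add,
          Matrix.mul_one]
        have : (∑ l ∈ s, E l) * E a = 0 := by
          rw [Finset.sum_mul]
          exact Finset.sum_eq_zero fun l hl => hEmul l a (fun hh => ha (hh ▸ hl))
        rw [this, add_zero]
        abel
      rw [hsplit, Matrix.det_mul, ih, hdetE a, Finset.prod_insert ha, mul_comm]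
  rw [hfact, Matrix.det_mul, key Finset.univ]
end

section
/- For distinct leaves, the functions k_w(·, x) span a space of dimension 2^q when all w_i > 0: the 2^q functions {k_w(·, x) : x ∈ {0,1}^q} are linearly independent as functions on {0,1}^q. -/
/-- Binary tree kernel. -/
noncomputable def btKernel {q : ℕ} (w : Fin q → ℝ) (x₁ x₂ : Fin q → Bool) : ℝ :=
  ∑ i : Fin q, w i * (if ∀ j : Fin q, (j : ℕ) ≤ (i : ℕ) → x₁ j = x₂ j then (1 : ℝ) else 0)

private lemma sum_rot3 {α β γ : Type*} [Fintype α] [Fintype β] [Fintype γ]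
    (f : α → β → γ → ℝ) :
    ∑ a, ∑ b, ∑ c, f a b c = ∑ c, ∑ b, ∑ a, f a b c := by
  rw [Finset.sum_comm]
  rw [show (∑ b : β, ∑ a : α, ∑ c : γ, f a b c) = ∑ b : β, ∑ c : γ, ∑ a : α, f a b c from
    Finset.sum_congr rfl fun b _ => Finset.sum_comm]
  exact Finset.sum_comm

private lemma sum_rot3' {α β γ : Type*} [Fintype α] [Fintype β] [Fintype γ]
    (f : α → β → γ → ℝ) :
    ∑ c, ∑ a, ∑ b, f a b c = ∑ a, ∑ b, ∑ c, f a b c := by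
  rw [Finset.sum_comm]
  exact Finset.sum_congr rfl fun a _ => Finset.sum_comm

/-- With strictly positive weights, the `2^q` functions `k_w(·, x)` are linearly
independent as functions on `{0,1}^q`. -/
theorem btKernel_sections_linearIndependent {q : ℕ} (hq : 0 < q) (w : Fin q → ℝ)
    (hw : ∀ i, 0 < w i) :
    LinearIndependent ℝ
      (fun x : Fin q → Bool => (fun y : Fin q → Bool => btKernel w y x)) := by
  rw [Fintype.linearIndependent_iff]
  intro g hg x0
  have hg' : ∀ y : Fin q → Bool, ∑ x, g x * btKernel w y x = 0 := by
    intro y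
    have := congrFun hg y
    simpa [Fintype.sum_apply, smul_eq_mul] using this
  -- the quadratic form vanishes
  have hS : ∑ y, g y * ∑ x, g x * btKernel w y x = 0 := by
    simp [hg']
  -- expand the quadratic form by kernel terms
  set Q : Fin q → ℝ := fun i =>
    ∑ x, ∑ y, g x * g y *
      (if ∀ j : Fin q, (j : ℕ) ≤ (i : ℕ) → x j = y j then (1 : ℝ) else 0) with hQdef
  have hexp : ∑ y, g y * ∑ x, g x * btKernel w y x = ∑ i : Fin q, w i * Q i := by
    simp only [hQdef, btKernel, Finset.mul_sum]
    rw [sum_rot3 (fun (y x : Fin q → Bool) (i : Fin q) =>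
      g y * (g x * (w i * (if ∀ j : Fin q, (j : ℕ) ≤ (i : ℕ) → y j = x j then (1:ℝ) else 0))))]
    refine Finset.sum_congr rfl fun i _ => Finset.sum_congr rfl fun x _ =>
      Finset.sum_congr rfl fun y _ => ?_
    have hiff : (∀ j : Fin q, (j : ℕ) ≤ (i : ℕ) → y j = x j) ↔
        (∀ j : Fin q, (j : ℕ) ≤ (i : ℕ) → x j = y j) := by
      constructor <;> intro h j hj <;> exact (h j hj).symm
    rw [if_congr hiff rfl rfl]
    ring
  -- each Q i is nonnegative (it is a sum of squares over prefix classes)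
  have hQnonneg : ∀ i : Fin q, 0 ≤ Q i := by
    intro i
    set p : (Fin q → Bool) → (Fin q → Bool) := fun x j =>
      if (j : ℕ) ≤ (i : ℕ) then x j else false with hp
    have hiff : ∀ x y : Fin q → Bool,
        (∀ j : Fin q, (j : ℕ) ≤ (i : ℕ) → x j = y j) ↔ p x = p y := by
      intro x y
      constructor
      · intro h
        funext j
        simp only [hp]
        split
        · exact h j (by assumption)
        · rfl
      · intro h j hj
        have := congrFun h j
        simp only [hp] at this
        rwa [if_pos hj, if_pos hj] at this
    have hQ : Q i = ∑ z : Fin q → Bool,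
        (∑ x, g x * (if p x = z then (1 : ℝ) else 0)) ^ 2 := by
      simp only [hQdef]
      have hsq : ∀ z : Fin q → Bool,
          (∑ x, g x * (if p x = z then (1 : ℝ) else 0)) ^ 2
            = ∑ x, ∑ y, (g x * (if p x = z then (1:ℝ) else 0))
                * (g y * (if p y = z then (1:ℝ) else 0)) := by
        intro z
        rw [sq, Finset.sum_mul_sum]
      simp only [hsq]
      rw [sum_rot3' (fun (x y z : Fin q → Bool) =>
        (g x * (if p x = z then (1:ℝ) else 0)) * (g y * (if p y = z then (1:ℝ) else 0)))]
      refine Finset.sum_congr rfl fun x _ => Finset.sum_congr rfl fun y _ => ?_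
      rw [if_congr (hiff x y) rfl rfl]
      rcases eq_or_ne (p x) (p y) with h | h
      · rw [if_pos h, Finset.sum_eq_single (p y)]
        · simp [h]
        · intro z _ hz
          have h1 : p y ≠ z := fun hh => hz hh.symm
          simp [h1]
        · simp
      · rw [if_neg h, Finset.sum_eq_zero]
        · simp
        · intro z _
          rcases eq_or_ne (p x) z with hx | hx
          · have : p y ≠ z := fun hy => h (hx.trans hy.symm)
            simp [this]
          · simp [hx]
    rw [hQ]
    exact Finset.sum_nonneg fun z _ => sq_nonneg _
  -- the last term gives the sum of squares of g
  have hlast : Q ⟨q - 1, by omega⟩ = ∑ x, g x ^ 2 := by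
    simp only [hQdef]
    refine Finset.sum_congr rfl fun x _ => ?_
    rw [Finset.sum_eq_single x]
    · have : ∀ j : Fin q, (j : ℕ) ≤ q - 1 → x j = x j := fun _ _ => rfl
      rw [if_pos this]
      ring
    · intro y _ hy
      have : ¬ ∀ j : Fin q, (j : ℕ) ≤ q - 1 → x j = y j := by
        intro h
        apply hy
        funext j
        exact (h j (by omega)).symm
      simp [this]
    · intro h; exact absurd (Finset.mem_univ x) h
  -- conclude
  set i0 : Fin q := ⟨q - 1, by omega⟩
  have hterm : w i0 * Q i0 ≤ ∑ i : Fin q, w i * Q i :=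
    Finset.single_le_sum (fun i _ => mul_nonneg (hw i).le (hQnonneg i))
      (Finset.mem_univ i0)
  rw [← hexp, hS, hlast] at hterm
  have hsum0 : ∑ x, g x ^ 2 ≤ 0 := by
    by_contra h
    push_neg at h
    have := mul_pos (hw i0) h
    linarith
  have hsum : ∑ x, g x ^ 2 = 0 :=
    le_antisymm hsum0 (Finset.sum_nonneg fun x _ => sq_nonneg _)
  have := (Finset.sum_eq_zero_iff_of_nonneg (fun x _ => sq_nonneg (g x))).mp hsum
    x0 (Finset.mem_univ x0)
  exact pow_eq_zero_iff (by norm_num) |>.mp this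
end

section
/- If every w_i > 0 and the points X₁,…,Xₙ ∈ {0,1}^q are pairwise distinct, then the binary tree kernel matrix K_{XX} is positive definite (not merely semidefinite). -/
/-!
The kernel matrix is `∑ᵢ wᵢ • Cᵢ`, where `Cᵢ` records which points share their prefix of length
`i + 1`. Each `Cᵢ` is `BᴴB` for the incidence matrix `B` of the points against their prefixes,
hence positive semidefinite. The last prefix is the whole string, so for distinct points the last
summand is `w_last • 1`, which is positive definite.
-/

open Matrix

namespace Matrix

variable {ι α : Type*} [DecidableEq α]

def coincidenceMatrix (R : Type*) [Zero R] [One R] (f : ι → α) : Matrix ι ι R :=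
  of fun i j => if f i = f j then 1 else 0

def fiberIncidenceMatrix (R : Type*) [Zero R] [One R] (f : ι → α) :
    Matrix (Set.range f) ι R :=
  of fun v j => if f j = v then 1 else 0

theorem coincidenceMatrix_eq_conjTranspose_mul_self {R : Type*} [Ring R] [StarRing R]
    [Fintype ι] (f : ι → α) :
    coincidenceMatrix R f = (fiberIncidenceMatrix R f)ᴴ * fiberIncidenceMatrix R f := by
  ext i j
  rw [mul_apply, Fintype.sum_eq_single ⟨f i, i, rfl⟩]
  · by_cases h : f i = f j <;> simp [coincidenceMatrix, fiberIncidenceMatrix, h, eq_comm]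
  · rintro ⟨v, hv⟩ hne
    have : f i ≠ v := fun h => hne (Subtype.ext h.symm)
    simp [fiberIncidenceMatrix, this]

theorem coincidenceMatrix_posSemidef {R : Type*} [Ring R] [PartialOrder R] [StarRing R]
    [StarOrderedRing R] [Fintype ι] (f : ι → α) : (coincidenceMatrix R f).PosSemidef := by
  rw [coincidenceMatrix_eq_conjTranspose_mul_self]
  exact posSemidef_conjTranspose_mul_self _

theorem coincidenceMatrix_of_injective {R : Type*} [Zero R] [One R] [DecidableEq ι] {f : ι → α}
    (hf : f.Injective) : coincidenceMatrix R f = 1 := by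
  ext i j
  simp [coincidenceMatrix, hf.eq_iff, one_apply]

end Matrix

theorem btKernel_matrix_eq_sum {q n : ℕ} (w : Fin q → ℝ) (X : Fin n → Fin q → Bool) :
    (of fun j j' : Fin n => btKernel w (X j) (X j')) =
      ∑ i, w i • coincidenceMatrix ℝ ((Set.Iic i).domRestrict ∘ X) := by
  ext j j'
  simp only [btKernel, of_apply, Matrix.sum_apply, Matrix.smul_apply, coincidenceMatrix,
    smul_eq_mul, Function.comp_apply, Set.domRestrict_eq_domRestrict_iff, Set.EqOn, Fin.le_def,
    Set.mem_Iic]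

theorem domRestrict_Iic_last_injective {q : ℕ} {β : Type*} :
    Function.Injective ((Set.Iic (Fin.last q)).domRestrict : (Fin (q + 1) → β) → _) :=
  fun _ _ h => funext fun j => congr_fun h ⟨j, Fin.le_last j⟩

theorem btKernel_matrix_posDef {q n : ℕ} (hq : 0 < q) (w : Fin q → ℝ)
    (hw : ∀ i, 0 < w i) (X : Fin n → Fin q → Bool) (hX : Function.Injective X) :
    (Matrix.of fun j j' : Fin n => btKernel w (X j) (X j')).PosDef := by
  obtain ⟨q, rfl⟩ := Nat.exists_eq_add_one_of_ne_zero hq.ne'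
  rw [btKernel_matrix_eq_sum, Fin.sum_univ_castSucc]
  refine PosDef.posSemidef_add
    (posSemidef_sum _ fun i _ => (coincidenceMatrix_posSemidef _).smul (hw _).le) ?_
  rw [coincidenceMatrix_of_injective (domRestrict_Iic_last_injective.comp hX)]
  exact PosDef.one.smul (hw _)
end
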